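/- arXiv:1606.08087 — 6 statements merged into one kernel-verified Lean document; each statement's English description precedes it below -/
import Mathlib

section
/- Let G be a graph with a co-comparability ordering v_1, …, v_n. Then for every i with 1 ≤ i ≤ n-1, there is no induced matching of size 2 in G between {v_1, …, v_i} and {v_{i+1}, …, v_n}; that is, there do not exist indices i_1, i_2 ≤ i and j_1, j_2 > i such that v_{i_1}v_{j_1} and v_{i_2}v_{j_2} are edges while no other edges exist among these four vertices. -/
open SimpleGraph
open scoped Classical

noncomputable section

/-- The graph `K_t ⊠ S_t`: a clique of size `t` (the `inl` part), an independent set of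
size `t` (the `inr` part), joined by a perfect matching. -/
def ktst (t : ℕ) : SimpleGraph (Fin t ⊕ Fin t) :=
  SimpleGraph.fromRel (fun x y =>
    match x, y with
    | Sum.inl i, Sum.inl j => i ≠ j
    | Sum.inl i, Sum.inr j => i = j
    | _, _ => False)

/-- The graph `K_t ⊠ K_t`: two cliques of size `t` joined by a perfect matching. -/
def ktkt (t : ℕ) : SimpleGraph (Fin t ⊕ Fin t) :=
  SimpleGraph.fromRel (fun x y =>
    match x, y with
    | Sum.inl i, Sum.inl j => i ≠ j
    | Sum.inr i, Sum.inr j => i ≠ j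
    | Sum.inl i, Sum.inr j => i = j
    | _, _ => False)

/-- The cycle graph on `ZMod n`. -/
def cycleG (n : ℕ) : SimpleGraph (ZMod n) :=
  SimpleGraph.fromRel (fun x y => y = x + 1)

/-- `σ` enumerates the vertices of `G` as a co-comparability ordering. -/
def IsCoCompOrdering {V : Type} {n : ℕ} (G : SimpleGraph V) (σ : Fin n ≃ V) : Prop :=
  ∀ i j k : Fin n, i < j → j < k → G.Adj (σ i) (σ k) →
    G.Adj (σ j) (σ i) ∨ G.Adj (σ j) (σ k)

/-- `G` contains `H` as an induced subgraph. -/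
def ContainsInducedIso {V W : Type} (G : SimpleGraph V) (H : SimpleGraph W) : Prop :=
  ∃ f : W → V, Function.Injective f ∧ ∀ x y, H.Adj x y ↔ G.Adj (f x) (f y)

/-- A graph is chordal iff it has no induced cycle of length at least 4. -/
def Chordal {V : Type} (G : SimpleGraph V) : Prop :=
  ∀ n, 4 ≤ n → ¬ ContainsInducedIso G (cycleG n)

/-- `G` contains `H` as an induced minor (via an induced minor model). -/
def HasInducedMinor {V W : Type} (G : SimpleGraph V) (H : SimpleGraph W) : Prop :=
  ∃ S : W → Set V,
    (∀ w, (G.induce (S w)).Connected) ∧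
    (∀ w w', w ≠ w' → Disjoint (S w) (S w')) ∧
    (∀ w w', H.Adj w w' → ∃ a ∈ S w, ∃ b ∈ S w', G.Adj a b) ∧
    (∀ w w', w ≠ w' → ¬ H.Adj w w' → ∀ a ∈ S w, ∀ b ∈ S w', ¬ G.Adj a b)

/-- `G` contains `K_t` as a minor (branch sets). -/
def HasCliqueMinor {V : Type} (G : SimpleGraph V) (t : ℕ) : Prop :=
  ∃ S : Fin t → Set V,
    (∀ i, (G.induce (S i)).Connected) ∧
    (∀ i j, i ≠ j → Disjoint (S i) (S j)) ∧
    (∀ i j, i ≠ j → ∃ a ∈ S i, ∃ b ∈ S j, G.Adj a b)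

/-- There is an induced matching of `G` of size `m` between `A` and its complement:
the `2m` matched vertices induce exactly the `m` matching edges in `G`. -/
def IsSimMatching {V : Type} (G : SimpleGraph V) (A : Set V) (m : ℕ) : Prop :=
  ∃ a b : Fin m → V,
    Function.Injective a ∧ Function.Injective b ∧
    (∀ i, a i ∈ A) ∧ (∀ i, b i ∉ A) ∧
    (∀ i j, G.Adj (a i) (b j) ↔ i = j) ∧
    (∀ i j, ¬ G.Adj (a i) (a j)) ∧
    (∀ i j, ¬ G.Adj (b i) (b j))

/-- There is an induced matching of size `m` in the bipartite graph `G[A, V \ A]`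
of edges crossing the cut. -/
def IsMimMatching {V : Type} (G : SimpleGraph V) (A : Set V) (m : ℕ) : Prop :=
  ∃ a b : Fin m → V,
    Function.Injective a ∧ Function.Injective b ∧
    (∀ i, a i ∈ A) ∧ (∀ i, b i ∉ A) ∧
    (∀ i j, G.Adj (a i) (b j) ↔ i = j)

def simval {V : Type} (G : SimpleGraph V) (A : Set V) : ℕ :=
  sSup {m | IsSimMatching G A m}

def mimval {V : Type} (G : SimpleGraph V) (A : Set V) : ℕ :=
  sSup {m | IsMimMatching G A m}

/-- GF(2)-rank of the `A × Aᶜ` submatrix of the adjacency matrix: the dimension of the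
span of the rows of that submatrix (rows extended by zero on columns of `A`). -/
def cutrk {V : Type} [Fintype V] (G : SimpleGraph V) (A : Set V) : ℕ :=
  Module.finrank (ZMod 2) (Submodule.span (ZMod 2)
    {r : V → ZMod 2 | ∃ a ∈ A, r = fun v => if v ∉ A ∧ G.Adj a v then 1 else 0})

/-- A branch-decomposition of a graph on vertex set `V`: a finite subcubic tree together
with an injection of `V` onto its leaves. -/
structure BranchDecomp (V : Type) [Fintype V] where
  β : Type
  finβ : Fintype β
  T : SimpleGraph β
  connected : T.Connected
  acyclic : T.IsAcyclic
  subcubic : ∀ x : β, (T.neighborSet x).ncard = 1 ∨ (T.neighborSet x).ncard = 3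
  L : V → β
  inj : Function.Injective L
  leaves : ∀ x : β, (T.neighborSet x).ncard = 1 ↔ ∃ v, L v = x

/-- The side of the cut induced by the tree edge `xy`, on the side of `x`. -/
def BranchDecomp.cut {V : Type} [Fintype V] (D : BranchDecomp V) (x y : D.β) : Set V :=
  {v | (D.T.deleteEdges {s(x, y)}).Reachable (D.L v) x}

/-- The `f`-width of a graph on vertex set `V`: minimum over branch-decompositions of the
maximum of `f` over the cuts of the decomposition. -/
def fWidth {V : Type} [Fintype V] (f : Set V → ℕ) : ℕ :=
  sInf {w | ∃ D : BranchDecomp V, ∀ x y, D.T.Adj x y → f (D.cut x y) ≤ w}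

def simw {V : Type} [Fintype V] (G : SimpleGraph V) : ℕ := fWidth (simval G)
def mimw {V : Type} [Fintype V] (G : SimpleGraph V) : ℕ := fWidth (mimval G)
def rankw {V : Type} [Fintype V] (G : SimpleGraph V) : ℕ := fWidth (cutrk G)

/-- Contraction of the edge `v₁v₂`: the vertex `v₂` is removed and `v₁` plays the role of
the contracted vertex `z`, adjacent to all former neighbors of `v₁` or `v₂`. -/
def contractE {V : Type} (G : SimpleGraph V) (v1 v2 : V) : SimpleGraph {v : V // v ≠ v2} :=
  SimpleGraph.fromRel (fun x y =>
    G.Adj x y ∨ ((x : V) = v1 ∧ G.Adj v2 y) ∨ ((y : V) = v1 ∧ G.Adj (x : V) v2))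

/-- The `(p × q)` column-clique grid. -/
def ccGrid (p q : ℕ) : SimpleGraph (Fin p × Fin q) :=
  SimpleGraph.fromRel (fun u v =>
    (u.2 = v.2) ∨ (u.1 = v.1 ∧ ((u.2 : ℕ) + 1 = v.2 ∨ (v.2 : ℕ) + 1 = u.2)))

/-- The `(p × q)` Hsu-clique chain graph. -/
def hsu (p q : ℕ) : SimpleGraph (Fin p × Fin q) :=
  SimpleGraph.fromRel (fun u v =>
    (u.2 = v.2) ∨ ((u.2 : ℕ) + 1 = v.2 ∧ u.1 ≤ v.1))

/-- The `(k × k)` grid graph. -/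
def gridG (k : ℕ) : SimpleGraph (Fin k × Fin k) :=
  SimpleGraph.fromRel (fun u v =>
    (u.1 = v.1 ∧ (u.2 : ℕ) + 1 = v.2) ∨ (u.2 = v.2 ∧ (u.1 : ℕ) + 1 = v.1))

/-- A tree-decomposition of `G`. -/
structure TreeDecomp (V : Type) (G : SimpleGraph V) where
  β : Type
  finβ : Fintype β
  T : SimpleGraph β
  connected : T.Connected
  acyclic : T.IsAcyclic
  B : β → Set V
  coverV : ∀ v : V, ∃ t, v ∈ B t
  coverE : ∀ u v, G.Adj u v → ∃ t, u ∈ B t ∧ v ∈ B t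
  coherent : ∀ v : V, (T.induce {t | v ∈ B t}).Connected

/-- Tree-width. -/
def tw {V : Type} (G : SimpleGraph V) : ℕ :=
  sInf {k | ∃ D : TreeDecomp V G, ∀ t, (D.B t).ncard ≤ k + 1}

/-- `G` is `d`-degenerate: every (induced) subgraph has a vertex of degree at most `d`. -/
def Degenerate {V : Type} (G : SimpleGraph V) (d : ℕ) : Prop :=
  ∀ S : Set V, S.Nonempty → ∃ v ∈ S, {u ∈ S | G.Adj v u}.ncard ≤ d

/-- Every graph on `N` vertices contains a clique of size `k` or an independent set of
size `l`. -/
def ramseyProp (N k l : ℕ) : Prop :=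
  ∀ G : SimpleGraph (Fin N),
    (∃ s : Finset (Fin N), G.IsNClique k s) ∨ (∃ s : Finset (Fin N), Gᶜ.IsNClique l s)

/-- The Ramsey number `R(k, l)`. -/
def ramsey (k l : ℕ) : ℕ := sInf {N | ramseyProp N k l}

/-- `G` is a circle graph: the intersection graph of chords of a circle, equivalently the
overlap graph of a family of intervals with pairwise distinct endpoints. -/
def IsCircleGraph {V : Type} (G : SimpleGraph V) : Prop :=
  ∃ a b : V → ℝ, (∀ v, a v < b v) ∧
    (∀ v w : V, v ≠ w → a v ≠ a w ∧ a v ≠ b w ∧ b v ≠ a w ∧ b v ≠ b w) ∧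
    (∀ v w, G.Adj v w ↔
      (a v < a w ∧ a w < b v ∧ b v < b w) ∨ (a w < a v ∧ a v < b w ∧ b w < b v))

/-- Vertex set of the split graph witnessing unbounded mim-width: a clique `Fin m`
together with one independent vertex for each nonempty subset of the clique. -/
abbrev splitV (m : ℕ) := Fin m ⊕ {S : Finset (Fin m) // S.Nonempty}

/-- The split graph with clique of size `m` and an independent set of size `2^m - 1`
whose vertices have pairwise distinct nonempty neighborhoods in the clique. -/
def splitG (m : ℕ) : SimpleGraph (splitV m) :=
  SimpleGraph.fromRel (fun x y =>
    match x, y with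
    | Sum.inl i, Sum.inl j => i ≠ j
    | Sum.inl i, Sum.inr S => i ∈ S.1
    | _, _ => False)

end

/-- in a graph with a co-comparability ordering there is no induced matching
of size 2 between any prefix `{v₁, …, vᵢ}` and the corresponding suffix. -/
theorem stmt1 {V : Type} (G : SimpleGraph V) {n : ℕ} (σ : Fin n ≃ V)
    (hσ : IsCoCompOrdering G σ) (i : Fin n) :
    ¬ ∃ i1 i2 j1 j2 : Fin n, i1 ≤ i ∧ i2 ≤ i ∧ i < j1 ∧ i < j2 ∧
      i1 ≠ i2 ∧ j1 ≠ j2 ∧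
      G.Adj (σ i1) (σ j1) ∧ G.Adj (σ i2) (σ j2) ∧
      ¬ G.Adj (σ i1) (σ i2) ∧ ¬ G.Adj (σ j1) (σ j2) ∧
      ¬ G.Adj (σ i1) (σ j2) ∧ ¬ G.Adj (σ i2) (σ j1) := by
  rintro ⟨i1, i2, j1, j2, h1, h2, h3, h4, hne, -, e1, e2, na, -, nb, nc⟩
  rcases lt_or_gt_of_ne hne with h | h
  · rcases hσ i1 i2 j1 h (lt_of_le_of_lt h2 h3) e1 with h' | h'
    · exact na h'.symm
    · exact nc h'
  · rcases hσ i2 i1 j2 h (lt_of_le_of_lt h1 h4) e2 with h' | h'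
    · exact na h'
    · exact nb h'
end

section
/- Let G be a graph with a co-comparability ordering v_1, …, v_n, let t ≥ 2, and suppose there is an induced matching {v_{i_1}v_{j_1}, …, v_{i_t}v_{j_t}} in the bipartite graph G[{v_1,…,v_i}, {v_{i+1},…,v_n}] with all i_ℓ ≤ i < j_ℓ (where this bipartite graph keeps only edges crossing the cut). Then both {v_{i_1}, …, v_{i_t}} and {v_{j_1}, …, v_{j_t}} are cliques in G, and hence G contains K_t ⊠ K_t as an induced subgraph. -/
open SimpleGraph
open scoped Classical

/-- if a graph with a co-comparability ordering has an induced matching of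
size `t` in the bipartite graph of edges crossing a prefix cut, then both endpoint sets
are cliques, and hence the graph contains `K_t ⊠ K_t` as an induced subgraph. -/
theorem stmt2 {V : Type} (G : SimpleGraph V) {n : ℕ} (σ : Fin n ≃ V)
    (hσ : IsCoCompOrdering G σ) (t : ℕ) (ht : 2 ≤ t) (i : Fin n)
    (a b : Fin t → Fin n) (ha : Function.Injective a) (hb : Function.Injective b)
    (hai : ∀ l, a l ≤ i) (hbi : ∀ l, i < b l)
    (hm : ∀ l l', G.Adj (σ (a l)) (σ (b l')) ↔ l = l') :
    (∀ l l', l ≠ l' → G.Adj (σ (a l)) (σ (a l'))) ∧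
    (∀ l l', l ≠ l' → G.Adj (σ (b l)) (σ (b l'))) ∧
    ContainsInducedIso G (ktkt t) := by
  have hclA : ∀ l l', l ≠ l' → G.Adj (σ (a l)) (σ (a l')) := by
    have key : ∀ l l', a l < a l' → G.Adj (σ (a l')) (σ (a l)) := by
      intro l l' hlt
      have hll : G.Adj (σ (a l)) (σ (b l)) := (hm l l).mpr rfl
      rcases hσ (a l) (a l') (b l) hlt (lt_of_le_of_lt (hai l') (hbi l)) hll with h | h
      · exact h
      · exfalso
        have e := (hm l' l).mp h
        exact hlt.ne (by rw [e])
    intro l l' hne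
    rcases lt_or_gt_of_ne (fun h => hne (ha h)) with h | h
    · exact (key l l' h).symm
    · exact key l' l h
  have hclB : ∀ l l', l ≠ l' → G.Adj (σ (b l)) (σ (b l')) := by
    have key : ∀ l l', b l < b l' → G.Adj (σ (b l)) (σ (b l')) := by
      intro l l' hlt
      have hll : G.Adj (σ (a l')) (σ (b l')) := (hm l' l').mpr rfl
      rcases hσ (a l') (b l) (b l') (lt_of_le_of_lt (hai l') (hbi l)) hlt hll with h | h
      · exfalso
        have e := (hm l' l).mp h.symm
        exact hlt.ne (by rw [e])
      · exact h
    intro l l' hne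
    rcases lt_or_gt_of_ne (fun h => hne (hb h)) with h | h
    · exact key l l' h
    · exact (key l' l h).symm
  refine ⟨hclA, hclB, Sum.elim (fun l => σ (a l)) (fun l => σ (b l)), ?_, ?_⟩
  · have hab : ∀ l l', σ (a l) ≠ σ (b l') := by
      intro l l' h
      have := σ.injective h
      exact absurd (this ▸ hai l) (not_le.mpr (hbi l'))
    rintro (x | x) (y | y) h <;> simp only [Sum.elim_inl, Sum.elim_inr] at h
    · exact congrArg Sum.inl (ha (σ.injective h))
    · exact absurd h (hab x y)
    · exact absurd h.symm (hab y x)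
    · exact congrArg Sum.inr (hb (σ.injective h))
  · have hirr : ∀ l l', G.Adj (σ (a l)) (σ (a l')) ↔ l ≠ l' := by
      intro l l'
      refine ⟨fun h e => ?_, hclA l l'⟩
      subst e; exact G.irrefl h
    have hirrB : ∀ l l', G.Adj (σ (b l)) (σ (b l')) ↔ l ≠ l' := by
      intro l l'
      refine ⟨fun h e => ?_, hclB l l'⟩
      subst e; exact G.irrefl h
    rintro (x | x) (y | y) <;>
      simp only [ktkt, SimpleGraph.fromRel_adj, Sum.elim_inl, Sum.elim_inr,
        ne_eq, Sum.inl.injEq, Sum.inr.injEq, reduceCtorEq]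
    · constructor
      · rintro ⟨hne, _⟩; exact hclA x y hne
      · intro h; exact ⟨(hirr x y).mp h, Or.inl ((hirr x y).mp h)⟩
    · constructor
      · rintro ⟨_, h | h⟩
        · exact (hm x y).mpr h
        · exact h.elim
      · intro h; exact ⟨not_false, Or.inl ((hm x y).mp h)⟩
    · constructor
      · rintro ⟨_, h | h⟩
        · exact h.elim
        · exact ((hm y x).mpr h).symm
      · intro h; exact ⟨not_false, Or.inr ((hm y x).mp h.symm)⟩
    · constructor
      · rintro ⟨hne, _⟩; exact hclB x y hne
      · intro h; exact ⟨(hirrB x y).mp h, Or.inl ((hirrB x y).mp h)⟩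
end

section
/- Let G be a graph, (A,B) a bipartition of V(G) such that N_G(B) ∩ A is a clique, and suppose G is chordal (has no induced cycle of length ≥ 4). If {a_1b_1, …, a_tb_t} is an induced matching in the bipartite graph G[A,B] with a_ℓ ∈ A and b_ℓ ∈ B, then {b_1, …, b_t} is an independent set in G, and consequently G contains K_t ⊠ S_t as an induced subgraph. -/
open SimpleGraph
open scoped Classical

/-- if `G` is chordal, `(A, Aᶜ)` a bipartition with `N_G(Aᶜ) ∩ A` a clique,
and `{a₁b₁, …, a_tb_t}` an induced matching of the bipartite graph `G[A, Aᶜ]`, then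
`{b₁, …, b_t}` is independent and `G` contains `K_t ⊠ S_t` as an induced subgraph. -/
theorem stmt3 {V : Type} (G : SimpleGraph V) (A : Set V)
    (hchordal : Chordal G)
    (hclique : ∀ a a', a ∈ A → a' ∈ A → a ≠ a' →
      (∃ b ∉ A, G.Adj a b) → (∃ b ∉ A, G.Adj a' b) → G.Adj a a')
    (t : ℕ) (a b : Fin t → V)
    (ha : Function.Injective a) (hb : Function.Injective b)
    (haA : ∀ i, a i ∈ A) (hbA : ∀ i, b i ∉ A)
    (hm : ∀ i j, G.Adj (a i) (b j) ↔ i = j) :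
    (∀ i j, ¬ G.Adj (b i) (b j)) ∧ ContainsInducedIso G (ktst t) := by
  have hab : ∀ i j, a i ≠ b j := fun i j h => hbA j (h ▸ haA i)
  have haa : ∀ i j, i ≠ j → G.Adj (a i) (a j) := fun i j hij =>
    hclique (a i) (a j) (haA i) (haA j) (fun h => hij (ha h))
      ⟨b i, hbA i, (hm i i).2 rfl⟩ ⟨b j, hbA j, (hm j j).2 rfl⟩
  have hbb : ∀ i j, ¬ G.Adj (b i) (b j) := by
    intro i j hadj
    rcases eq_or_ne i j with rfl | hij
    · exact G.irrefl hadj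
    · apply hchordal 4 le_rfl
      have hai : a i ≠ a j := fun h => hij (ha h)
      have hbi : b i ≠ b j := fun h => hij (hb h)
      set f : ZMod 4 → V := fun x => if x = 0 then a i else if x = 1 then a j
        else if x = 2 then b j else b i with hf
      have e0 : f 0 = a i := by simp [hf]
      have e1 : f 1 = a j := by
        simp [hf]; exact fun h => absurd h (by decide)
      have e2 : f 2 = b j := by
        simp [hf]; rw [if_neg (by decide), if_neg (by decide)]
      have e3 : f 3 = b i := by
        simp [hf]; rw [if_neg (by decide), if_neg (by decide), if_neg (by decide)]
      have hall : ∀ x : ZMod 4, x = 0 ∨ x = 1 ∨ x = 2 ∨ x = 3 := by decide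
      refine ⟨f, ?_, ?_⟩
      · intro x y hxy
        rcases hall x with rfl | rfl | rfl | rfl <;>
          rcases hall y with rfl | rfl | rfl | rfl <;>
          simp only [e0, e1, e2, e3] at hxy <;>
          first
          | rfl
          | exact absurd hxy hai
          | exact absurd hxy.symm hai
          | exact absurd hxy hbi
          | exact absurd hxy.symm hbi
          | exact absurd hxy (hab _ _)
          | exact absurd hxy.symm (hab _ _)
      · intro x y
        rcases hall x with rfl | rfl | rfl | rfl <;>
          rcases hall y with rfl | rfl | rfl | rfl <;>
          simp only [e0, e1, e2, e3] <;>
          first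
          | exact iff_of_true (by simp only [cycleG, SimpleGraph.fromRel_adj]; decide)
              (haa i j hij)
          | exact iff_of_true (by simp only [cycleG, SimpleGraph.fromRel_adj]; decide)
              (haa i j hij).symm
          | exact iff_of_true (by simp only [cycleG, SimpleGraph.fromRel_adj]; decide)
              ((hm i i).2 rfl)
          | exact iff_of_true (by simp only [cycleG, SimpleGraph.fromRel_adj]; decide)
              ((hm i i).2 rfl).symm
          | exact iff_of_true (by simp only [cycleG, SimpleGraph.fromRel_adj]; decide)
              ((hm j j).2 rfl)
          | exact iff_of_true (by simp only [cycleG, SimpleGraph.fromRel_adj]; decide)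
              ((hm j j).2 rfl).symm
          | exact iff_of_true (by simp only [cycleG, SimpleGraph.fromRel_adj]; decide)
              hadj
          | exact iff_of_true (by simp only [cycleG, SimpleGraph.fromRel_adj]; decide)
              hadj.symm
          | exact iff_of_false (by simp only [cycleG, SimpleGraph.fromRel_adj]; decide)
              G.irrefl
          | exact iff_of_false (by simp only [cycleG, SimpleGraph.fromRel_adj]; decide)
              (fun h => hij ((hm i j).1 h))
          | exact iff_of_false (by simp only [cycleG, SimpleGraph.fromRel_adj]; decide)
              (fun h => hij ((hm i j).1 h.symm))
          | exact iff_of_false (by simp only [cycleG, SimpleGraph.fromRel_adj]; decide)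
              (fun h => hij (((hm j i).1 h).symm))
          | exact iff_of_false (by simp only [cycleG, SimpleGraph.fromRel_adj]; decide)
              (fun h => hij (((hm j i).1 h.symm).symm))
  refine ⟨hbb, Sum.elim a b, ?_, ?_⟩
  · intro x y hxy
    cases x with
    | inl i => cases y with
      | inl j => exact congrArg Sum.inl (ha hxy)
      | inr j => exact absurd hxy (hab _ _)
    | inr i => cases y with
      | inl j => exact absurd hxy.symm (hab _ _)
      | inr j => exact congrArg Sum.inr (hb hxy)
  · intro x y
    cases x with
    | inl i => cases y with
      | inl j =>
        simp only [ktst, SimpleGraph.fromRel_adj, Sum.elim_inl, ne_eq, Sum.inl.injEq]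
        constructor
        · rintro ⟨h, _⟩ ; exact haa i j h
        · intro h
          have hij : i ≠ j := by rintro rfl; exact G.irrefl h
          exact ⟨hij, Or.inl hij⟩
      | inr j =>
        simp only [ktst, SimpleGraph.fromRel_adj, Sum.elim_inl, Sum.elim_inr]
        constructor
        · rintro ⟨_, h | h⟩
          · exact (hm i j).2 h
          · exact h.elim
        · intro h
          exact ⟨by simp, Or.inl ((hm i j).1 h)⟩
    | inr i => cases y with
      | inl j =>
        simp only [ktst, SimpleGraph.fromRel_adj, Sum.elim_inl, Sum.elim_inr]
        constructor
        · rintro ⟨_, h | h⟩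
          · exact h.elim
          · exact ((hm j i).2 h).symm
        · intro h
          exact ⟨by simp, Or.inr ((hm j i).1 h.symm)⟩
      | inr j =>
        simp only [ktst, SimpleGraph.fromRel_adj, Sum.elim_inr]
        constructor
        · rintro ⟨_, h | h⟩ <;> exact h.elim
        · intro h; exact absurd h (hbb i j)
end

section
/- For every integer m ≥ 4, let G be the split graph with clique C of size m, independent set I of size 2^m − 1, where the vertices of I have pairwise distinct nonempty neighborhoods in C. Then the mim-width of G is at least m/(4·log_2 m). Consequently, for n = m + 2^m − 1, there is an n-vertex split graph of mim-width at least (log_2 n)/(5·log_2 log_2 n), so split graphs (and hence chordal graphs) have unbounded mim-width. -/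
open SimpleGraph
open scoped Classical

/-!
Fix a branch decomposition of `splitG m`. Its tree is subcubic and the `2^m - 1` independent
vertices sit at leaves, so some tree edge leaves at least a third of them on each side. One side
`A` of that cut also misses a set `B` of at least half of the clique, `|B| = k ≥ m / 2`. The
traces `S ∩ B` of the independent vertices `S ∈ A` are at least `(2^m - 1) / (3 · 2^(m-k))` in
number, which exceeds `∑_{i<t} (k choose i)` for `t = ⌈m / (4 log₂ m)⌉`; by the Sauer–Shelah
lemma they shatter a `t`-subset of `B`. Matching each element `b` of it with an independent
vertex whose trace meets the subset exactly in `{b}` gives an induced matching of size `t` across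
the cut. The second bound follows because `log₂ (m + 2^m - 1)` lies between `m` and `m + 1`.
-/

open Finset

namespace SimpleGraph

variable {β : Type} {T : SimpleGraph β}

def edgeSide (T : SimpleGraph β) (x y : β) : Set β :=
  {z | (T.deleteEdges {s(x, y)}).Reachable z x}

lemma self_mem_edgeSide (x y : β) : x ∈ T.edgeSide x y := Reachable.refl x

lemma mem_edgeSide_iff_reachable {x y z : β} :
    z ∈ T.edgeSide y x ↔ (T.deleteEdges {s(x, y)}).Reachable z y := by
  rw [edgeSide, Set.mem_ofPred_eq, Sym2.eq_swap]

lemma Walk.reachable_deleteEdges_of_notMem_support {G : SimpleGraph β} (hG : G ≤ T)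
    {a b c y : β} (p : G.Walk a b) (hy : y ∉ p.support) :
    (T.deleteEdges {s(c, y)}).Reachable a b := by
  refine Reachable.mono (deleteEdges_mono hG) ⟨p.toDeleteEdges _ fun e he h ↦ hy ?_⟩
  rw [Set.mem_singleton_iff] at h
  exact p.snd_mem_support_of_mem_edges (h ▸ he)

lemma mem_edgeSide_or (hc : T.Connected) {x y : β} (h : T.Adj x y) (z : β) :
    z ∈ T.edgeSide x y ∨ z ∈ T.edgeSide y x := by
  classical
  obtain ⟨P, hP⟩ := hc.exists_isPath z x
  by_cases heP : s(x, y) ∈ P.edges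
  · have hyP := P.snd_mem_support_of_mem_edges heP
    right
    rw [mem_edgeSide_iff_reachable, Sym2.eq_swap]
    exact (P.takeUntil y hyP).reachable_deleteEdges_of_notMem_support le_rfl
      (Walk.endpoint_notMem_support_takeUntil hP hyP h.ne)
  · exact Or.inl ⟨P.toDeleteEdges _ fun e he h ↦ heP (Set.mem_singleton_iff.mp h ▸ he)⟩

lemma notMem_edgeSide_swap (ha : T.IsAcyclic) {x y z : β} (h : T.Adj x y)
    (hx : z ∈ T.edgeSide x y) : z ∉ T.edgeSide y x := fun hy ↦
  isBridge_iff.mp (isAcyclic_iff_forall_adj_isBridge.mp ha h)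
    (hx.symm.trans (mem_edgeSide_iff_reachable.mp hy))

lemma mem_edgeSide_swap_iff (hc : T.Connected) (ha : T.IsAcyclic) {x y : β} (h : T.Adj x y)
    (z : β) : z ∈ T.edgeSide y x ↔ z ∉ T.edgeSide x y :=
  ⟨fun hy hx ↦ notMem_edgeSide_swap ha h hx hy, (mem_edgeSide_or hc h z).resolve_left⟩

lemma edgeSide_subset_edgeSide (ha : T.IsAcyclic) {x y z : β} (hxy : T.Adj x y)
    (hyz : T.Adj y z) (hzx : z ≠ x) : T.edgeSide z y ⊆ T.edgeSide y x := by
  rintro u ⟨p⟩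
  have hy : y ∉ p.support := fun hy ↦
    notMem_edgeSide_swap ha hyz.symm ⟨p.dropUntil y hy⟩ (self_mem_edgeSide y z)
  have huz := p.reachable_deleteEdges_of_notMem_support (deleteEdges_le _) (c := x) hy
  refine mem_edgeSide_iff_reachable.mpr (huz.trans (Adj.reachable ?_))
  rw [deleteEdges_adj, Set.mem_singleton_iff, Sym2.eq_iff]
  exact ⟨hyz.symm, by rintro (⟨h, -⟩ | ⟨-, h⟩); exacts [hzx h, hxy.ne h.symm]⟩

lemma mem_edgeSide_cases {x y u : β} (hu : u ∈ T.edgeSide y x) :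
    u = y ∨ ∃ z, T.Adj y z ∧ z ≠ x ∧ u ∈ T.edgeSide z y := by
  obtain ⟨p, hp⟩ := (mem_edgeSide_iff_reachable.mp hu).symm.exists_isPath
  cases p with
  | nil => exact Or.inl rfl
  | @cons _ z _ hyz q =>
    rw [Walk.cons_isPath_iff] at hp
    obtain ⟨hyz, hne⟩ := (deleteEdges_adj ..).mp hyz
    refine Or.inr ⟨z, hyz, ?_, ?_⟩
    · rintro rfl
      exact hne Sym2.eq_swap
    · exact q.reverse.reachable_deleteEdges_of_notMem_support (deleteEdges_le _)
        (by simpa using hp.2)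

lemma card_filter_edgeSide_add_swap (hc : T.Connected) (ha : T.IsAcyclic) {x y : β}
    (h : T.Adj x y) (F : Finset β) :
    #{z ∈ F | z ∈ T.edgeSide x y} + #{z ∈ F | z ∈ T.edgeSide y x} = #F := by
  simp_rw [mem_edgeSide_swap_iff hc ha h]
  exact card_filter_add_card_filter_not _

lemma card_filter_edgeSide_le_sum [Fintype β] (x y : β) (F : Finset β) :
    #{z ∈ F | z ∈ T.edgeSide y x} ≤ #{z ∈ F | z = y} +
      ∑ z ∈ (T.neighborSet y).toFinset.erase x, #{u ∈ F | u ∈ T.edgeSide z y} := by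
  refine (card_le_card fun u hu ↦ ?_).trans
    ((card_union_le _ _).trans (by gcongr; exact card_biUnion_le))
  rw [mem_filter] at hu
  rcases mem_edgeSide_cases hu.2 with rfl | ⟨z, hyz, hzx, huz⟩
  · simp [hu.1]
  · exact mem_union_right _ (mem_biUnion.mpr ⟨z, by simp [hzx, hyz], mem_filter.mpr ⟨hu.1, huz⟩⟩)

lemma exists_onward_edge_of_heavy [Fintype β] (hdeg : ∀ z, (T.neighborSet z).ncard ≤ 3)
    {F : Finset β} (hF : ∀ z ∈ F, (T.neighborSet z).ncard ≤ 1) (hF2 : 2 ≤ #F) {x y : β}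
    (hxy : T.Adj x y) (hheavy : 2 * #F < 3 * #{z ∈ F | z ∈ T.edgeSide y x}) :
    ∃ z, T.Adj y z ∧ z ≠ x ∧ #F < 3 * #{u ∈ F | u ∈ T.edgeSide z y} := by
  have hN : #((T.neighborSet y).toFinset.erase x) + 1 = (T.neighborSet y).ncard := by
    rw [card_erase_add_one (by simpa using hxy.symm), Set.ncard_eq_toFinset_card']
  have hcover := card_filter_edgeSide_le_sum (T := T) x y F
  by_cases hyF : y ∈ F
  · have hempty : (T.neighborSet y).toFinset.erase x = ∅ := by
      have := hF y hyF
      rw [← card_eq_zero]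
      omega
    have : #{z ∈ F | z = y} ≤ 1 := card_le_one.mpr (by grind)
    rw [hempty, sum_empty] at hcover
    omega
  · obtain ⟨z, hz, hzy⟩ : ∃ z ∈ (T.neighborSet y).toFinset.erase x,
        #F < 3 * #{u ∈ F | u ∈ T.edgeSide z y} := by
      refine exists_lt_of_sum_lt ?_
      have : #{z ∈ F | z = y} = 0 := by simp [hyF]
      have := hdeg y
      rw [sum_const, smul_eq_mul, ← mul_sum]
      nlinarith
    rw [mem_erase, Set.mem_toFinset, mem_neighborSet] at hz
    exact ⟨z, hz.2, hz.1, hzy⟩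

theorem exists_balanced_edge [Fintype β] (hc : T.Connected) (ha : T.IsAcyclic)
    (hdeg : ∀ z, (T.neighborSet z).ncard ≤ 3) (F : Finset β)
    (hF : ∀ z ∈ F, (T.neighborSet z).ncard ≤ 1) (hF2 : 2 ≤ #F) :
    ∃ x y, T.Adj x y ∧ #F ≤ 3 * #{z ∈ F | z ∈ T.edgeSide x y} ∧
      #F ≤ 3 * #{z ∈ F | z ∈ T.edgeSide y x} := by
  by_contra! hlight
  have heavy : ∀ x y, T.Adj x y → #F < 3 * #{z ∈ F | z ∈ T.edgeSide y x} →
      2 * #F < 3 * #{z ∈ F | z ∈ T.edgeSide y x} := fun x y h h' ↦ by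
    have := hlight y x h.symm h'.le
    have := card_filter_edgeSide_add_swap hc ha h F
    omega
  obtain ⟨a, -, b, -, hab⟩ := one_lt_card.mp hF2
  obtain ⟨p⟩ := hc.preconnected a b
  have h₀ := p.adj_snd (Walk.not_nil_of_ne hab)
  -- Take a heavy directed edge with smallest far side: the heavy onward edge contradicts this.
  set H := (univ : Finset (β × β)).filter fun e ↦
    T.Adj e.1 e.2 ∧ 2 * #F < 3 * #{z ∈ F | z ∈ T.edgeSide e.2 e.1}
  have hH : H.Nonempty := by
    have := card_filter_edgeSide_add_swap hc ha h₀ F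
    rcases (by omega : #F < 3 * #{z ∈ F | z ∈ T.edgeSide p.snd a} ∨
        #F < 3 * #{z ∈ F | z ∈ T.edgeSide a p.snd}) with h | h
    · exact ⟨(a, p.snd), by simpa [H] using ⟨h₀, heavy _ _ h₀ h⟩⟩
    · exact ⟨(p.snd, a), by simpa [H] using ⟨h₀.symm, heavy _ _ h₀.symm h⟩⟩
  obtain ⟨⟨x, y⟩, hxy, hmin⟩ := H.exists_min_image (fun e ↦ #(T.edgeSide e.2 e.1).toFinset) hH
  simp only [H, mem_filter, mem_univ, true_and] at hxy
  obtain ⟨z, hyz, hzx, hzy⟩ := exists_onward_edge_of_heavy hdeg hF hF2 hxy.1 hxy.2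
  have hsub : T.edgeSide z y ⊂ T.edgeSide y x :=
    ⟨edgeSide_subset_edgeSide ha hxy.1 hyz hzx, fun h ↦
      notMem_edgeSide_swap ha hyz (self_mem_edgeSide y z) (h (self_mem_edgeSide y x))⟩
  exact (hmin (y, z) (by simpa [H] using ⟨hyz, heavy _ _ hyz hzy⟩)).not_gt
    (card_lt_card (Set.toFinset_ssubset_toFinset.mpr hsub))

lemma isAcyclic_of_lower_neighbor_unique {α : Type} [LinearOrder α] {G : SimpleGraph α}
    (h : ∀ x y z, G.Adj x y → G.Adj x z → y < x → z < x → y = z) : G.IsAcyclic := by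
  intro v c hc
  set M := c.support.toFinset.max' ⟨v, by simp⟩
  have hM : M ∈ c.support := List.mem_toFinset.mp (max'_mem _ _)
  have hle : ∀ u ∈ (c.rotate M hM).support, u ≤ M := fun u hu ↦
    le_max' _ _ (List.mem_toFinset.mpr ((c.mem_support_rotate_iff M hM).mp hu))
  have hc' := hc.rotate hM
  have hsnd := (c.rotate M hM).adj_snd hc'.not_nil
  have hpen := (c.rotate M hM).adj_penultimate hc'.not_nil
  exact hc'.snd_ne_penultimate (h M _ _ hsnd hpen.symm
    ((hle _ (Walk.getVert_mem_support _ _)).lt_of_ne hsnd.ne')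
    ((hle _ (Walk.getVert_mem_support _ _)).lt_of_ne hpen.ne))

lemma connected_of_forall_exists_lt_adj {α : Type} [LinearOrder α] [WellFoundedLT α]
    {G : SimpleGraph α} (a : α) (h : ∀ x, x ≠ a → ∃ y < x, G.Adj x y) : G.Connected := by
  have hreach : ∀ x, G.Reachable x a := fun x ↦ by
    induction x using WellFoundedLT.induction with
    | _ x ih =>
      by_cases hx : x = a
      · exact hx ▸ Reachable.refl x
      · obtain ⟨y, hyx, hxy⟩ := h x hx
        exact hxy.reachable.trans (ih y hyx)
  exact (connected_iff_exists_forall_reachable G).mpr ⟨a, fun x ↦ (hreach x).symm⟩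

/-- The odd vertices `1, 3, 5, …` form the spine, the even vertex `i + 1` hangs off each odd `i`,
and `0` hangs off `1`; the leaves are the even vertices and the last vertex `2k - 1`. -/
def caterpillar (k : ℕ) : SimpleGraph (Fin (2 * k)) :=
  fromRel fun a b ↦ a.val % 2 = 1 ∧ (b.val = a.val + 1 ∨ b.val = a.val + 2) ∨
    a.val = 0 ∧ b.val = 1

lemma caterpillar_adj {k : ℕ} {a b : Fin (2 * k)} :
    (caterpillar k).Adj a b ↔ a.val ≠ b.val ∧
      (a.val % 2 = 1 ∧ (b.val = a.val + 1 ∨ b.val = a.val + 2) ∨ a.val = 0 ∧ b.val = 1 ∨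
        b.val % 2 = 1 ∧ (a.val = b.val + 1 ∨ a.val = b.val + 2) ∨ b.val = 0 ∧ a.val = 1) := by
  simp only [caterpillar, fromRel_adj, ne_eq, Fin.ext_iff]
  tauto

lemma caterpillar_isTree {k : ℕ} (hk : 0 < k) : (caterpillar k).IsTree := by
  refine ⟨connected_of_forall_exists_lt_adj ⟨0, by omega⟩ fun x hx ↦ ?_,
    isAcyclic_of_lower_neighbor_unique fun x y z hy hz hyx hzx ↦ ?_⟩
  · have hx : x.val ≠ 0 := fun h ↦ hx (Fin.ext h)
    refine ⟨⟨x - 1 - x % 2, by have := x.isLt; omega⟩, ?_, ?_⟩ <;>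
      simp only [Fin.lt_def, caterpillar_adj] <;> omega
  · rw [caterpillar_adj] at hy hz
    rw [Fin.lt_def] at hyx hzx
    ext
    omega

lemma caterpillar_ncard_neighborSet {k : ℕ} (x : Fin (2 * k)) :
    ((caterpillar k).neighborSet x).ncard =
      if x.val % 2 = 1 ∧ x.val + 1 < 2 * k then 3 else 1 := by
  split_ifs with hx
  · rw [Set.ncard_eq_three]
    refine ⟨⟨x - 2, by omega⟩, ⟨x + 1, by omega⟩, ⟨x + 2, by omega⟩, by simp [Fin.ext_iff]; omega,
      by simp [Fin.ext_iff]; omega, by simp [Fin.ext_iff], ?_⟩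
    ext y
    simp only [mem_neighborSet, caterpillar_adj, Set.mem_insert_iff, Set.mem_singleton_iff,
      Fin.ext_iff]
    omega
  · rw [Set.ncard_eq_one]
    have := x.isLt
    refine ⟨⟨if x.val = 0 then 1 else x - 1 - x % 2, by split_ifs <;> omega⟩, ?_⟩
    ext y
    simp only [mem_neighborSet, caterpillar_adj, Set.mem_singleton_iff, Fin.ext_iff]
    split_ifs <;> omega

end SimpleGraph

open SimpleGraph

namespace BranchDecomp

variable {V : Type} [Fintype V]

lemma nonempty_of_two_le_card (hV : 2 ≤ Fintype.card V) : Nonempty (BranchDecomp V) := by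
  set k := Fintype.card V - 1
  let e := Fintype.equivFin V
  have he : ∀ v, (e v).val < k + 1 := fun v ↦ by have := (e v).isLt; omega
  refine ⟨{
    β := Fin (2 * k)
    finβ := inferInstance
    T := caterpillar k
    connected := (caterpillar_isTree (by omega)).connected
    acyclic := (caterpillar_isTree (by omega)).isAcyclic
    subcubic := fun x ↦ by rw [caterpillar_ncard_neighborSet]; split_ifs <;> simp
    L := fun v ↦ ⟨min (2 * e v) (2 * k - 1), by have := he v; omega⟩
    inj := fun v w h ↦ e.injective (Fin.ext (by have := he v; have := he w; simp at h; omega))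
    leaves := fun x ↦ ?_ }⟩
  have := x.isLt
  rw [caterpillar_ncard_neighborSet]
  split_ifs with hx
  · simp only [OfNat.ofNat_ne_one, false_iff, not_exists, Fin.ext_iff]
    intro v h
    have := he v
    omega
  · refine iff_of_true rfl ⟨e.symm ⟨(x + 1) / 2, by omega⟩, Fin.ext ?_⟩
    simp only [Equiv.apply_symm_apply]
    omega

lemma mem_cut_swap_iff (D : BranchDecomp V) {x y : D.β} (h : D.T.Adj x y) (v : V) :
    v ∈ D.cut y x ↔ v ∉ D.cut x y :=
  mem_edgeSide_swap_iff D.connected D.acyclic h (D.L v)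

lemma exists_balanced_cut (D : BranchDecomp V) (U : Finset V) (hU : 2 ≤ #U) :
    ∃ x y, D.T.Adj x y ∧
      #U ≤ 3 * #{v ∈ U | v ∈ D.cut x y} ∧ #U ≤ 3 * #{v ∈ U | v ∈ D.cut y x} := by
  let := D.finβ
  have hF : ∀ z ∈ U.map ⟨D.L, D.inj⟩, (D.T.neighborSet z).ncard ≤ 1 := fun z hz ↦ by
    obtain ⟨v, -, rfl⟩ := mem_map.mp hz
    exact ((D.leaves _).mpr ⟨v, rfl⟩).le
  obtain ⟨x, y, hxy, h⟩ := exists_balanced_edge D.connected D.acyclic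
    (fun z ↦ (D.subcubic z).elim (·.le.trans (by norm_num)) (·.le)) _ hF (by simpa using hU)
  simp only [filter_map, card_map] at h
  exact ⟨x, y, hxy, h⟩

end BranchDecomp

lemma le_fWidth {V : Type} [Fintype V] {f : Set V → ℕ} {t : ℕ} (hV : 2 ≤ Fintype.card V)
    (h : ∀ D : BranchDecomp V, ∃ x y, D.T.Adj x y ∧ t ≤ f (D.cut x y)) : t ≤ fWidth f := by
  obtain ⟨D⟩ := BranchDecomp.nonempty_of_two_le_card hV
  let := D.finβ
  refine le_csInf ⟨univ.sup fun e : D.β × D.β ↦ f (D.cut e.1 e.2), D, fun x y _ ↦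
    le_sup (f := fun e : D.β × D.β ↦ f (D.cut e.1 e.2)) (mem_univ (x, y))⟩ ?_
  rintro w ⟨D', hD'⟩
  obtain ⟨x, y, hxy, ht⟩ := h D'
  exact ht.trans (hD' x y hxy)

lemma Finset.exists_shatters_card_eq_of_sum_choose_lt {α : Type} [DecidableEq α]
    {𝒜 : Finset (Finset α)} {B : Finset α} (h𝒜 : ∀ u ∈ 𝒜, u ⊆ B) {t : ℕ}
    (ht : ∑ i ∈ range t, (#B).choose i < #𝒜) : ∃ s ⊆ B, 𝒜.Shatters s ∧ #s = t := by
  have hB : ∀ s ∈ 𝒜.shatterer, s ⊆ B := fun s hs ↦ by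
    obtain ⟨u, hu, hsu⟩ := (mem_shatterer.mp hs).exists_superset
    exact hsu.trans (h𝒜 u hu)
  obtain ⟨s, hs, hts⟩ : ∃ s ∈ 𝒜.shatterer, t ≤ #s := by
    by_contra! hlt
    have hsub : 𝒜.shatterer ⊆ (range t).biUnion B.powersetCard := fun s hs ↦
      mem_biUnion.mpr ⟨#s, mem_range.mpr (hlt s hs), mem_powersetCard.mpr ⟨hB s hs, rfl⟩⟩
    have := (card_le_card_shatterer 𝒜).trans ((card_le_card hsub).trans card_biUnion_le)
    simp only [card_powersetCard] at this
    omega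
  obtain ⟨s', hs's, hcard⟩ := exists_subset_card_eq hts
  exact ⟨s', hs's.trans (hB s hs), (mem_shatterer.mp hs).mono_right hs's, hcard⟩

lemma Finset.card_le_two_pow_mul_card_image_inter {α : Type} [Fintype α] [DecidableEq α]
    (𝒜 : Finset (Finset α)) (B : Finset α) : #𝒜 ≤ 2 ^ #Bᶜ * #(𝒜.image (· ∩ B)) := by
  refine card_le_mul_card_image _ _ fun u _ ↦ ?_
  rw [← card_powerset]
  refine card_le_card_of_injOn (· ∩ Bᶜ) (fun S _ ↦ by simp) fun S hS S' hS' h ↦ ?_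
  simp only [coe_filter, Set.mem_ofPred_eq] at hS hS'
  rw [← sup_inf_inf_compl (x := S) (y := B), ← sup_inf_inf_compl (x := S') (y := B)]
  exact congrArg₂ (· ⊔ ·) (hS.2.trans hS'.2.symm) h

lemma isMimMatching_card_of_private_neighbors {V : Type} {G : SimpleGraph V} {A : Set V}
    (s : Finset V) (hs : ∀ v ∈ s, v ∉ A)
    (h : ∀ v ∈ s, ∃ a ∈ A, ∀ w ∈ s, G.Adj a w ↔ w = v) : IsMimMatching G A #s := by
  choose f hfA hf using h
  let b : Fin #s → V := fun i ↦ s.equivFin.symm i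
  have hb : ∀ i, b i ∈ s := fun i ↦ (s.equivFin.symm i).2
  have hb_inj : b.Injective := fun i j hij ↦ s.equivFin.symm.injective (Subtype.ext hij)
  have hadj : ∀ i j, G.Adj (f (b i) (hb i)) (b j) ↔ i = j := fun i j ↦ by
    rw [hf _ _ _ (hb j), hb_inj.eq_iff, eq_comm]
  refine ⟨fun i ↦ f (b i) (hb i), b, fun i j hij ↦ ((hadj j i).mp ?_).symm, hb_inj,
    fun i ↦ hfA _ _, fun i ↦ hs _ (hb i), hadj⟩
  have := (hadj i i).mpr rfl
  simp only at hij
  rwa [hij] at this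

lemma IsMimMatching.le_card {V : Type} [Fintype V] {G : SimpleGraph V} {A : Set V} {t : ℕ}
    (h : IsMimMatching G A t) : t ≤ Fintype.card V := by
  obtain ⟨a, -, ha, -⟩ := h
  simpa using Fintype.card_le_of_injective a ha

lemma IsMimMatching.le_mimval {V : Type} [Fintype V] {G : SimpleGraph V} {A : Set V} {t : ℕ}
    (h : IsMimMatching G A t) : t ≤ mimval G A :=
  le_csSup ⟨Fintype.card V, fun _ ↦ IsMimMatching.le_card⟩ h

lemma Nat.sum_range_succ_pow_le_two_mul {k : ℕ} (hk : 2 ≤ k) (d : ℕ) :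
    ∑ i ∈ range (d + 1), k ^ i ≤ 2 * k ^ d := by
  induction d with
  | zero => simp
  | succ d ih =>
    rw [sum_range_succ, pow_succ]
    nlinarith [Nat.zero_le (k ^ d)]

lemma Nat.pow_lt_two_pow_of_pow_four_mul_lt {m d : ℕ} (h : m ^ (4 * d) < 2 ^ m) :
    m ^ d < 2 ^ ((m + 3) / 4) := by
  refine lt_of_pow_lt_pow_left₀ 4 (by positivity) ?_
  rw [← pow_mul, mul_comm, ← pow_mul]
  exact h.trans_le (Nat.pow_le_pow_right (by norm_num) (by omega))

/-- The hypothesis on `t` is `4 (t - 1) log₂ m < m` with the logarithm cleared. -/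
lemma three_mul_two_pow_mul_sum_choose_lt {m k t : ℕ} (hm : 4 ≤ m) (hmk : m ≤ 2 * k)
    (hkm : k ≤ m) (ht : m ^ (4 * (t - 1)) < 2 ^ m) :
    3 * 2 ^ (m - k) * ∑ i ∈ range t, k.choose i < 2 ^ m - 1 := by
  rcases Nat.lt_or_ge t 2 with ht2 | ht2
  · have hsum : ∑ i ∈ range t, k.choose i ≤ 1 := by interval_cases t <;> simp
    have hsplit : 2 ^ (m - k) * 2 ^ k = 2 ^ m := by rw [← pow_add, Nat.sub_add_cancel hkm]
    have hk := Nat.mul_le_mul_left (2 ^ (m - k)) (Nat.pow_le_pow_right two_pos (by omega) :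
      2 ^ 2 ≤ 2 ^ k)
    have hm : 2 ^ 4 ≤ 2 ^ m := Nat.pow_le_pow_right two_pos hm
    have := Nat.mul_le_mul_left (3 * 2 ^ (m - k)) hsum
    omega
  obtain ⟨d, rfl⟩ : ∃ d, t = d + 1 := ⟨t - 1, by omega⟩
  rw [Nat.add_sub_cancel] at ht
  have hm17 : 17 ≤ m := by
    have h4 : m ^ 4 < 2 ^ m := (Nat.pow_le_pow_right (by omega) (by omega)).trans_lt ht
    by_contra!
    interval_cases m <;> norm_num at h4
  have hsum : ∑ i ∈ range (d + 1), k.choose i ≤ 2 * m ^ d :=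
    calc ∑ i ∈ range (d + 1), k.choose i ≤ ∑ i ∈ range (d + 1), k ^ i :=
          sum_le_sum fun i _ ↦ Nat.choose_le_pow k i
      _ ≤ 2 * k ^ d := Nat.sum_range_succ_pow_le_two_mul (by omega) d
      _ ≤ 2 * m ^ d := by gcongr
  have hm3 : 2 ^ m = 2 ^ (m - 3) * 2 ^ 3 := by rw [← pow_add, Nat.sub_add_cancel (by omega)]
  calc 3 * 2 ^ (m - k) * ∑ i ∈ range (d + 1), k.choose i ≤ 3 * 2 ^ (m - k) * (2 * m ^ d) := by
        gcongr
    _ < 3 * 2 ^ (m - k) * (2 * 2 ^ ((m + 3) / 4)) := by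
        gcongr
        exact Nat.pow_lt_two_pow_of_pow_four_mul_lt ht
    _ = 6 * 2 ^ (m - k + (m + 3) / 4) := by ring
    _ ≤ 6 * 2 ^ (m - 3) := by gcongr <;> omega
    _ < 2 ^ m - 1 := by have := @Nat.one_le_two_pow (m - 3); omega

lemma pow_four_mul_ceil_sub_one_lt {m : ℕ} (hm : 2 ≤ m) :
    m ^ (4 * (⌈(m : ℝ) / (4 * Real.logb 2 m)⌉₊ - 1)) < 2 ^ m := by
  set t := ⌈(m : ℝ) / (4 * Real.logb 2 m)⌉₊
  have hL : 0 < Real.logb 2 m := Real.logb_pos one_lt_two (by exact_mod_cast hm)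
  have ht : ((t - 1 : ℕ) : ℝ) < m / (4 * Real.logb 2 m) := by
    rcases Nat.eq_zero_or_pos t with h | h
    · rw [h, Nat.zero_sub, Nat.cast_zero]
      positivity
    · rw [Nat.cast_sub h, Nat.cast_one]
      linarith [Nat.ceil_lt_add_one (by positivity : 0 ≤ (m : ℝ) / (4 * Real.logb 2 m))]
  rw [lt_div_iff₀ (by positivity)] at ht
  have : ((m ^ (4 * (t - 1)) : ℕ) : ℝ) < ((2 ^ m : ℕ) : ℝ) := by
    rw [Nat.cast_pow, Nat.cast_pow, Nat.cast_ofNat, ← Real.rpow_natCast (2 : ℝ) m,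
      ← Real.logb_lt_iff_lt_rpow one_lt_two (by positivity), Real.logb_pow]
    push_cast
    linarith
  exact_mod_cast this

lemma logb_div_five_logb_logb_le {m : ℕ} (hm : 4 ≤ m) :
    Real.logb 2 ((m : ℝ) + 2 ^ m - 1) / (5 * Real.logb 2 (Real.logb 2 ((m : ℝ) + 2 ^ m - 1))) ≤
      (m : ℝ) / (4 * Real.logb 2 m) := by
  set n : ℝ := (m : ℝ) + 2 ^ m - 1
  have hm4 : (4 : ℝ) ≤ m := by exact_mod_cast hm
  have hmn : (m : ℝ) ≤ 2 ^ m := by exact_mod_cast Nat.lt_two_pow_self.le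
  have hn : (2 : ℝ) ^ m ≤ n := by linarith
  have hn' : n ≤ (2 : ℝ) ^ (m + 1) := by rw [pow_succ]; linarith
  have hnpos : 0 < n := lt_of_lt_of_le (by positivity) hn
  have hLm : 2 ≤ Real.logb 2 m := by
    rw [Real.le_logb_iff_rpow_le one_lt_two (by positivity)]
    norm_num
    linarith
  have hLn : (m : ℝ) ≤ Real.logb 2 n := by
    rwa [Real.le_logb_iff_rpow_le one_lt_two hnpos, Real.rpow_natCast]
  have hLn' : Real.logb 2 n ≤ m + 1 := by
    rw [Real.logb_le_iff_le_rpow one_lt_two hnpos]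
    exact_mod_cast hn'
  have hLLn : Real.logb 2 m ≤ Real.logb 2 (Real.logb 2 n) :=
    Real.logb_le_logb_of_le one_lt_two (by positivity) hLn
  calc Real.logb 2 n / (5 * Real.logb 2 (Real.logb 2 n)) ≤ (m + 1) / (5 * Real.logb 2 m) :=
        div_le_div₀ (by linarith) hLn' (by linarith) (by linarith)
    _ ≤ m / (4 * Real.logb 2 m) := by
        rw [div_le_div_iff₀ (by linarith) (by linarith)]
        nlinarith

lemma Fintype.card_subtype_finset_nonempty (m : ℕ) :
    Fintype.card {S : Finset (Fin m) // S.Nonempty} = 2 ^ m - 1 := by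
  have : ({S | S.Nonempty} : Finset (Finset (Fin m))) = univ.erase ∅ := by
    ext S
    simp [nonempty_iff_ne_empty]
  rw [Fintype.card_subtype, this, card_erase_of_mem (mem_univ _), card_univ,
    Fintype.card_finset, Fintype.card_fin]

lemma splitG_adj_inr_inl {m : ℕ} (S : {S : Finset (Fin m) // S.Nonempty}) (i : Fin m) :
    (splitG m).Adj (Sum.inr S) (Sum.inl i) ↔ i ∈ S.1 := by
  simp [splitG]

theorem le_mimval_splitG {m t : ℕ} (hm : 4 ≤ m) (ht : m ^ (4 * (t - 1)) < 2 ^ m)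
    {A : Set (splitV m)} (hI : 2 ^ m - 1 ≤ 3 * #{S | Sum.inr S ∈ A})
    (hC : m ≤ 2 * #{i | Sum.inl i ∉ A}) : t ≤ mimval (splitG m) A := by
  set I : Finset {S : Finset (Fin m) // S.Nonempty} := {S | Sum.inr S ∈ A}
  set B : Finset (Fin m) := {i | Sum.inl i ∉ A}
  set 𝒜 := (I.map (Function.Embedding.subtype _)).image (· ∩ B)
  have htraces : #I ≤ 2 ^ (m - #B) * #𝒜 := by
    simpa [card_compl] using card_le_two_pow_mul_card_image_inter (I.map (.subtype _)) B
  have hlt : ∑ i ∈ range t, (#B).choose i < #𝒜 := by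
    refine Nat.lt_of_mul_lt_mul_left (a := 3 * 2 ^ (m - #B)) ?_
    calc _ < 2 ^ m - 1 :=
          three_mul_two_pow_mul_sum_choose_lt hm hC ((card_le_univ B).trans (by simp)) ht
      _ ≤ 3 * #I := hI
      _ ≤ _ := by rw [mul_assoc]; exact Nat.mul_le_mul_left 3 htraces
  obtain ⟨s, hsB, hshat, rfl⟩ := exists_shatters_card_eq_of_sum_choose_lt
    (fun u hu ↦ by obtain ⟨_, _, rfl⟩ := mem_image.mp hu; exact inter_subset_right) hlt
  rw [← card_map Function.Embedding.inl]
  refine (isMimMatching_card_of_private_neighbors _ ?_ ?_).le_mimval <;>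
    simp only [mem_map, Function.Embedding.inl_apply, forall_exists_index, and_imp] <;>
    rintro _ i hi rfl
  · simpa [B] using hsB hi
  · obtain ⟨u, hu, hsu⟩ := hshat.exists_inter_eq_singleton hi
    obtain ⟨_, hS, rfl⟩ := mem_image.mp hu
    obtain ⟨S, hSI, rfl⟩ := mem_map.mp hS
    refine ⟨Sum.inr S, by simpa [I] using hSI, ?_⟩
    rintro _ j hj rfl
    rw [splitG_adj_inr_inl, Sum.inl.injEq, ← mem_singleton, ← hsu]
    simp [hj, hsB hj]

theorem ceil_le_mimw_splitG {m : ℕ} (hm : 4 ≤ m) :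
    ⌈(m : ℝ) / (4 * Real.logb 2 m)⌉₊ ≤ mimw (splitG m) := by
  have hcard := Fintype.card_subtype_finset_nonempty m
  have h16 : 2 ^ 4 ≤ 2 ^ m := Nat.pow_le_pow_right two_pos hm
  refine le_fWidth (by rw [Fintype.card_sum, hcard]; omega) fun D ↦ ?_
  have hthr := pow_four_mul_ceil_sub_one_lt (by omega : 2 ≤ m)
  obtain ⟨x, y, hxy, hx, hy⟩ :=
    D.exists_balanced_cut (univ.map .inr) (by rw [card_map, card_univ, hcard]; omega)
  simp only [filter_map, card_map, card_univ, hcard] at hx hy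
  have hclique := card_filter_add_card_filter_not (s := univ)
    (p := fun i : Fin m ↦ Sum.inl i ∈ D.cut x y)
  rw [card_univ, Fintype.card_fin] at hclique
  rcases (by omega : m ≤ 2 * #{i | Sum.inl i ∉ D.cut x y} ∨
      m ≤ 2 * #{i | Sum.inl i ∈ D.cut x y}) with hC | hC
  · exact ⟨x, y, hxy, le_mimval_splitG hm hthr hx hC⟩
  · refine ⟨y, x, hxy.symm, le_mimval_splitG hm hthr hy ?_⟩
    simpa only [D.mem_cut_swap_iff hxy, not_not] using hC

/-- the split graph with a clique of size `m` and an independent set of all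
`2^m - 1` distinct nonempty neighborhoods has mim-width at least `m / (4 log₂ m)`, and
hence, with `n = m + 2^m - 1` vertices, mim-width at least `log₂ n / (5 log₂ log₂ n)`;
in particular, split (hence chordal) graphs have unbounded mim-width. -/
theorem stmt6 (m : ℕ) (hm : 4 ≤ m) :
    (m : ℝ) / (4 * Real.logb 2 m) ≤ (mimw (splitG m) : ℝ) ∧
    Real.logb 2 ((m : ℝ) + 2 ^ m - 1) /
        (5 * Real.logb 2 (Real.logb 2 ((m : ℝ) + 2 ^ m - 1))) ≤ (mimw (splitG m) : ℝ) := by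
  have h : (m : ℝ) / (4 * Real.logb 2 m) ≤ (mimw (splitG m) : ℝ) :=
    (Nat.le_ceil _).trans (by exact_mod_cast ceil_le_mimw_splitG hm)
  exact ⟨h, (logb_div_five_logb_logb_le hm).trans h⟩
end

section
/- Sauer–Shelah lemma: Let t be a positive integer and M an X × Y 0-1 matrix with |Y| ≥ 2 such that any two row vectors of M are distinct. If |X| ≥ |Y|^t, then there exist X' ⊆ X and Y' ⊆ Y with |X'| = 2^t and |Y'| = t such that all 2^t possible 0-1 vectors of length t appear as rows of the submatrix M[X', Y']. -/
open SimpleGraph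
open scoped Classical

/-! Pajor's inequality `#𝒜 ≤ #𝒜.shatterer` and the Sauer–Shelah bound on `#𝒜.shatterer`
give `|Y|^t ≤ |X| ≤ ∑_{k ≤ d} (|Y| choose k) < |Y|^(d+1)` for the family of row supports of
VC-dimension `d`, so `t ≤ d` and some `t`-set of columns is shattered; picking one row for each
of its `2^t` patterns gives `X'`. -/

namespace Finset

variable {α : Type*} [DecidableEq α]

lemma exists_shatters_card_eq_vcDim {𝒜 : Finset (Finset α)} (h𝒜 : 𝒜.Nonempty) :
    ∃ s, 𝒜.Shatters s ∧ #s = 𝒜.vcDim := by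
  obtain ⟨s, hs, hcard⟩ := exists_mem_eq_sup 𝒜.shatterer ⟨∅, by simpa⟩ card
  exact ⟨s, mem_shatterer.1 hs, hcard.symm⟩

lemma le_vcDim_of_pow_le [Fintype α] {𝒜 : Finset (Finset α)} {t : ℕ}
    (hα : 2 ≤ Fintype.card α) (h𝒜 : Fintype.card α ^ t ≤ #𝒜) : t ≤ 𝒜.vcDim := by
  by_contra! hlt
  have : #𝒜 < Fintype.card α ^ t := calc
    #𝒜 ≤ #𝒜.shatterer := card_le_card_shatterer 𝒜
    _ ≤ ∑ k ∈ Iic 𝒜.vcDim, (Fintype.card α).choose k := card_shatterer_le_sum_vcDim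
    _ ≤ ∑ k ∈ Iic 𝒜.vcDim, Fintype.card α ^ k := sum_le_sum fun k _ ↦ Nat.choose_le_pow _ _
    _ < Fintype.card α ^ t := Nat.geomSum_lt hα fun k hk ↦ (mem_Iic.1 hk).trans_lt hlt
  omega

lemma exists_shatters_card_eq_of_pow_le [Fintype α] {𝒜 : Finset (Finset α)} {t : ℕ}
    (hα : 2 ≤ Fintype.card α) (h𝒜 : Fintype.card α ^ t ≤ #𝒜) :
    ∃ s, 𝒜.Shatters s ∧ #s = t := by
  have h𝒜ne : 𝒜.Nonempty := card_pos.1 <| (Nat.pow_pos (n := t) (by omega)).trans_le h𝒜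
  obtain ⟨s, hs, hcard⟩ := exists_shatters_card_eq_vcDim h𝒜ne
  obtain ⟨u, hus, hu⟩ := exists_subset_card_eq ((le_vcDim_of_pow_le hα h𝒜).trans hcard.ge)
  exact ⟨u, hs.mono_right hus, hu⟩

end Finset

section Rows

open Finset

variable {X Y : Type*}

def rowSupport [Fintype Y] (M : X → Y → Bool) (x : X) : Finset Y := {y | M x y}

lemma rowSupport_injective [Fintype Y] {M : X → Y → Bool} (hM : Function.Injective M) :
    Function.Injective (rowSupport M) := by
  refine fun x x' h ↦ hM <| funext fun y ↦ Bool.eq_iff_iff.2 ?_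
  simpa [rowSupport] using congr(y ∈ $h)

lemma exists_eqOn_of_shatters [Fintype X] [Fintype Y] {M : X → Y → Bool} {s : Finset Y}
    (hs : (univ.image (rowSupport M)).Shatters s) (g : Y → Bool) :
    ∃ x, ∀ y ∈ s, M x y = g y := by
  obtain ⟨u, hu, hsu⟩ := hs (filter_subset (g · = true) s)
  obtain ⟨x, -, rfl⟩ := mem_image.1 hu
  refine ⟨x, fun y hy ↦ Bool.eq_iff_iff.2 ?_⟩
  simpa [rowSupport, hy] using congr(y ∈ $hsu)

lemma exists_card_eq_two_pow_of_forall_exists_eqOn (M : X → Y → Bool) (s : Finset Y)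
    (h : ∀ g : Y → Bool, ∃ x, ∀ y ∈ s, M x y = g y) :
    ∃ X' : Finset X, #X' = 2 ^ #s ∧ ∀ g : Y → Bool, ∃ x ∈ X', ∀ y ∈ s, M x y = g y := by
  let restrict : X → (s → Bool) := fun x y ↦ M x y
  have hrestrict : restrict.Surjective := fun g ↦ by
    obtain ⟨x, hx⟩ := h fun y ↦ if hy : y ∈ s then g ⟨y, hy⟩ else false
    exact ⟨x, funext fun y ↦ by simpa using hx y y.2⟩
  refine ⟨univ.image (Function.surjInv hrestrict), ?_, fun g ↦ ?_⟩
  · rw [card_image_of_injective _ (Function.injective_surjInv hrestrict)]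
    simp
  · exact ⟨_, mem_image_of_mem _ (mem_univ fun y : s ↦ g y),
      fun y hy ↦ congrFun (Function.surjInv_eq hrestrict _) ⟨y, hy⟩⟩

end Rows

theorem stmt7_general {X Y : Type} [Fintype X] [Fintype Y] (t : ℕ)
    (M : X → Y → Bool) (hM : Function.Injective M) (hY : 2 ≤ Fintype.card Y)
    (hX : Fintype.card Y ^ t ≤ Fintype.card X) :
    ∃ (X' : Finset X) (Y' : Finset Y), X'.card = 2 ^ t ∧ Y'.card = t ∧
      ∀ g : Y → Bool, ∃ x ∈ X', ∀ y ∈ Y', M x y = g y := by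
  have hcard : (Finset.univ.image (rowSupport M)).card = Fintype.card X :=
    Finset.card_image_of_injective _ (rowSupport_injective hM)
  obtain ⟨Y', hshatters, rfl⟩ := Finset.exists_shatters_card_eq_of_pow_le hY (hcard ▸ hX)
  obtain ⟨X', hX', hrows⟩ :=
    exists_card_eq_two_pow_of_forall_exists_eqOn M Y' (exists_eqOn_of_shatters hshatters)
  exact ⟨X', Y', hX', rfl, hrows⟩

/-- Sauer–Shelah lemma. If `M` is an `X × Y` 0-1 matrix with pairwise
distinct rows, `|Y| ≥ 2` and `|X| ≥ |Y|^t`, then there are `X' ⊆ X` with `|X'| = 2^t`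
and `Y' ⊆ Y` with `|Y'| = t` such that every 0-1 vector of length `t` appears as a row
of `M[X', Y']`. -/
theorem stmt7 {X Y : Type} [Fintype X] [Fintype Y] (t : ℕ) (ht : 1 ≤ t)
    (M : X → Y → Bool) (hM : Function.Injective M) (hY : 2 ≤ Fintype.card Y)
    (hX : Fintype.card Y ^ t ≤ Fintype.card X) :
    ∃ (X' : Finset X) (Y' : Finset Y), X'.card = 2 ^ t ∧ Y'.card = t ∧
      ∀ g : Y → Bool, ∃ x ∈ X', ∀ y ∈ Y', M x y = g y :=
  stmt7_general t M hM hY hX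
end

section
/- Key claim for contraction monotonicity of sim-width: let G be a graph with edge v_1v_2 and let z be the contracted vertex in G/v_1v_2. Let (A,B) be a bipartition of V(G/v_1v_2) with z ∈ A, and let (A',B') be the corresponding bipartition of V(G) where A' = (A\{z}) ∪ {v_1, v_2} (or A' = (A\{z}) ∪ {v_1} with v_2 ∈ B'). If there is an induced matching of size m in G/v_1v_2 between A and B, then there is an induced matching of size m in G between A' and B'. -/
open SimpleGraph
open scoped Classical

lemma contract_adj' {V : Type} (G : SimpleGraph V) (v1 v2 : V)
    (x y : {v : V // v ≠ v2}) :
    (contractE G v1 v2).Adj x y ↔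
      x ≠ y ∧ (G.Adj x y ∨ ((x : V) = v1 ∧ G.Adj v2 y) ∨ ((y : V) = v1 ∧ G.Adj v2 x)) := by
  simp only [contractE, SimpleGraph.fromRel_adj]
  have c1 : G.Adj (y:V) (x:V) ↔ G.Adj (x:V) (y:V) := G.adj_comm _ _
  have c2 : G.Adj (x:V) v2 ↔ G.Adj v2 (x:V) := G.adj_comm _ _
  have c3 : G.Adj (y:V) v2 ↔ G.Adj v2 (y:V) := G.adj_comm _ _
  tauto

/-- key claim for contraction monotonicity of sim-width. If `(A, B)` is a
bipartition of `G/v₁v₂` with the contracted vertex `z ∈ A`, and `(A', B')` is the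
corresponding bipartition of `G` (with `v₂` on either side), then an induced matching of
size `m` in `G/v₁v₂` between `A` and `B` yields one of size `m` in `G` between `A'`
and `B'`. -/
theorem stmt11 {V : Type} (G : SimpleGraph V) (v1 v2 : V) (h : G.Adj v1 v2)
    (hne : v1 ≠ v2)
    (A : Set {v : V // v ≠ v2}) (hz : (⟨v1, hne⟩ : {v : V // v ≠ v2}) ∈ A)
    (A' : Set V)
    (hA' : ∀ (v : V) (hv : v ≠ v2), v ∈ A' ↔ (⟨v, hv⟩ : {v : V // v ≠ v2}) ∈ A)
    (m : ℕ) (hm : IsSimMatching (contractE G v1 v2) A m) :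
    IsSimMatching G A' m := by
  classical
  obtain ⟨a, b, ha, hb, haA, hbA, hab, haa, hbb⟩ := hm
  set z : {v : V // v ≠ v2} := ⟨v1, hne⟩ with hzdef
  have key := contract_adj' G v1 v2
  have hbz : ∀ j, (b j : V) ≠ v1 := by
    intro j e
    exact hbA j (by rwa [show b j = z from Subtype.ext e])
  have lift : ∀ (x y : {v : V // v ≠ v2}), (x:V) ≠ v1 → (y:V) ≠ v1 →
      ((contractE G v1 v2).Adj x y ↔ G.Adj x y) := by
    intro x y hx hy
    rw [key]
    constructor
    · rintro ⟨-, h' | ⟨e, -⟩ | ⟨e, -⟩⟩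
      · exact h'
      · exact absurd e hx
      · exact absurd e hy
    · intro hadj
      refine ⟨fun e => G.irrefl (by rwa [e] at hadj), Or.inl hadj⟩
  have memA : ∀ i, (a i : V) ∈ A' := fun i => (hA' _ (a i).2).2 (haA i)
  have memB : ∀ j, (b j : V) ∉ A' := fun j hmem => hbA j ((hA' _ (b j).2).1 hmem)
  have ainj : Function.Injective (fun i => (a i : V)) :=
    fun i j e => ha (Subtype.coe_injective e)
  have binj : Function.Injective (fun j => (b j : V)) :=
    fun i j e => hb (Subtype.coe_injective e)
  by_cases hex : ∃ i0, a i0 = z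
  case neg =>
    have hai : ∀ i, (a i : V) ≠ v1 := fun i e => hex ⟨i, Subtype.ext e⟩
    refine ⟨fun i => (a i : V), fun j => (b j : V), ainj, binj, memA, memB, ?_, ?_, ?_⟩
    · intro i j
      constructor
      · intro hadj; exact (hab i j).mp ((lift _ _ (hai i) (hbz j)).mpr hadj)
      · intro e; exact (lift _ _ (hai i) (hbz j)).mp ((hab i j).mpr e)
    · intro i j hadj; exact haa i j ((lift _ _ (hai i) (hai j)).mpr hadj)
    · intro i j hadj; exact hbb i j ((lift _ _ (hbz i) (hbz j)).mpr hadj)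
  case pos =>
  obtain ⟨i0, hi0⟩ := hex
  have hai : ∀ i, i ≠ i0 → (a i : V) ≠ v1 := by
    intro i hi e
    exact hi (ha (by rw [hi0]; exact Subtype.ext e))
  have hz1 : G.Adj v1 (b i0) ∨ G.Adj v2 (b i0) := by
    have h' := (hab i0 i0).mpr rfl
    rw [hi0, key] at h'
    rcases h' with ⟨-, h' | ⟨-, h'⟩ | ⟨e, -⟩⟩
    · exact Or.inl h'
    · exact Or.inr h'
    · exact absurd e (hbz i0)
  have hzb : ∀ j, j ≠ i0 → ¬ G.Adj v1 (b j) ∧ ¬ G.Adj v2 (b j) := by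
    intro j hj
    have hne' : z ≠ b j := fun e => hbA j (e ▸ hz)
    have hn : ¬ (contractE G v1 v2).Adj z (b j) := by
      rw [← hi0]; intro hc; exact hj ((hab i0 j).mp hc).symm
    rw [key] at hn
    push_neg at hn
    have h'' := hn hne'
    exact ⟨h''.1, h''.2.1 rfl⟩
  have hza : ∀ j, j ≠ i0 → ¬ G.Adj v1 (a j) ∧ ¬ G.Adj v2 (a j) := by
    intro j hj
    have hne' : z ≠ a j := fun e => (hai j hj) (congrArg Subtype.val e.symm)
    have hn : ¬ (contractE G v1 v2).Adj z (a j) := by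
      rw [← hi0]; exact haa i0 j
    rw [key] at hn
    push_neg at hn
    have h'' := hn hne'
    exact ⟨h''.1, h''.2.1 rfl⟩
  have hca : (a i0 : V) = v1 := by rw [hi0]
  by_cases h1 : G.Adj v1 (b i0)
  · -- use v1 as the image of a i0
    refine ⟨fun i => (a i : V), fun j => (b j : V), ainj, binj, memA, memB, ?_, ?_, ?_⟩
    · intro i j
      show G.Adj (a i : V) (b j : V) ↔ i = j
      by_cases hi : i = i0
      · rw [hi, hca]
        by_cases hj : j = i0
        · rw [hj]; exact iff_of_true h1 rfl
        · exact iff_of_false (hzb j hj).1 (fun e => hj e.symm)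
      · constructor
        · intro hadj; exact (hab i j).mp ((lift _ _ (hai i hi) (hbz j)).mpr hadj)
        · intro e; exact (lift _ _ (hai i hi) (hbz j)).mp ((hab i j).mpr e)
    · intro i j hadj
      replace hadj : G.Adj (a i : V) (a j : V) := hadj
      by_cases hi : i = i0
      · rw [hi, hca] at hadj
        by_cases hj : j = i0
        · rw [hj, hca] at hadj; exact G.irrefl hadj
        · exact (hza j hj).1 hadj
      · by_cases hj : j = i0
        · rw [hj, hca] at hadj; exact (hza i hi).1 hadj.symm
        · exact haa i j ((lift _ _ (hai i hi) (hai j hj)).mpr hadj)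
    · intro i j hadj; exact hbb i j ((lift _ _ (hbz i) (hbz j)).mpr hadj)
  · have h2 : G.Adj v2 (b i0) := hz1.resolve_left h1
    by_cases hv2 : v2 ∈ A'
    · -- use v2 as the image of a i0
      refine ⟨fun i => if i = i0 then v2 else (a i : V), fun j => (b j : V), ?_, binj,
        ?_, memB, ?_, ?_, ?_⟩
      · intro i j e
        dsimp only at e
        by_cases hi : i = i0 <;> by_cases hj : j = i0
        · exact hi.trans hj.symm
        · rw [if_pos hi, if_neg hj] at e; exact absurd e.symm (a j).2
        · rw [if_neg hi, if_pos hj] at e; exact absurd e (a i).2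
        · rw [if_neg hi, if_neg hj] at e; exact ha (Subtype.coe_injective e)
      · intro i
        by_cases hi : i = i0
        · simpa [hi] using hv2
        · simpa [hi] using memA i
      · intro i j
        show G.Adj (if i = i0 then v2 else (a i : V)) (b j : V) ↔ i = j
        by_cases hi : i = i0
        · rw [hi, if_pos rfl]
          by_cases hj : j = i0
          · rw [hj]; exact iff_of_true h2 rfl
          · exact iff_of_false (hzb j hj).2 (fun e => hj e.symm)
        · rw [if_neg hi]
          constructor
          · intro hadj; exact (hab i j).mp ((lift _ _ (hai i hi) (hbz j)).mpr hadj)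
          · intro e; exact (lift _ _ (hai i hi) (hbz j)).mp ((hab i j).mpr e)
      · intro i j hadj
        replace hadj : G.Adj (if i = i0 then v2 else (a i : V))
          (if j = i0 then v2 else (a j : V)) := hadj
        by_cases hi : i = i0
        · rw [hi, if_pos rfl] at hadj
          by_cases hj : j = i0
          · rw [hj, if_pos rfl] at hadj; exact G.irrefl hadj
          · rw [if_neg hj] at hadj; exact (hza j hj).2 hadj
        · rw [if_neg hi] at hadj
          by_cases hj : j = i0
          · rw [hj, if_pos rfl] at hadj; exact (hza i hi).2 hadj.symm
          · rw [if_neg hj] at hadj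
            exact haa i j ((lift _ _ (hai i hi) (hai j hj)).mpr hadj)
      · intro i j hadj; exact hbb i j ((lift _ _ (hbz i) (hbz j)).mpr hadj)
    · -- use v2 as the image of b i0, matching v1 with v2
      refine ⟨fun i => (a i : V), fun j => if j = i0 then v2 else (b j : V), ainj, ?_,
        memA, ?_, ?_, ?_, ?_⟩
      · intro i j e
        dsimp only at e
        by_cases hi : i = i0 <;> by_cases hj : j = i0
        · exact hi.trans hj.symm
        · rw [if_pos hi, if_neg hj] at e; exact absurd e.symm (b j).2
        · rw [if_neg hi, if_pos hj] at e; exact absurd e (b i).2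
        · rw [if_neg hi, if_neg hj] at e; exact hb (Subtype.coe_injective e)
      · intro j
        by_cases hj : j = i0
        · simpa [hj] using hv2
        · simpa [hj] using memB j
      · intro i j
        show G.Adj (a i : V) (if j = i0 then v2 else (b j : V)) ↔ i = j
        by_cases hi : i = i0
        · rw [hi, hca]
          by_cases hj : j = i0
          · rw [hj, if_pos rfl]; exact iff_of_true h rfl
          · rw [if_neg hj]; exact iff_of_false (hzb j hj).1 (fun e => hj e.symm)
        · by_cases hj : j = i0
          · rw [hj, if_pos rfl]
            exact iff_of_false (fun hadj => (hza i hi).2 hadj.symm) (fun e => hi e)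
          · rw [if_neg hj]
            constructor
            · intro hadj; exact (hab i j).mp ((lift _ _ (hai i hi) (hbz j)).mpr hadj)
            · intro e; exact (lift _ _ (hai i hi) (hbz j)).mp ((hab i j).mpr e)
      · intro i j hadj
        replace hadj : G.Adj (a i : V) (a j : V) := hadj
        by_cases hi : i = i0
        · rw [hi, hca] at hadj
          by_cases hj : j = i0
          · rw [hj, hca] at hadj; exact G.irrefl hadj
          · exact (hza j hj).1 hadj
        · by_cases hj : j = i0
          · rw [hj, hca] at hadj; exact (hza i hi).1 hadj.symm
          · exact haa i j ((lift _ _ (hai i hi) (hai j hj)).mpr hadj)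
      · intro i j hadj
        replace hadj : G.Adj (if i = i0 then v2 else (b i : V))
          (if j = i0 then v2 else (b j : V)) := hadj
        by_cases hi : i = i0
        · rw [hi, if_pos rfl] at hadj
          by_cases hj : j = i0
          · rw [hj, if_pos rfl] at hadj; exact G.irrefl hadj
          · rw [if_neg hj] at hadj; exact (hzb j hj).2 hadj
        · rw [if_neg hi] at hadj
          by_cases hj : j = i0
          · rw [hj, if_pos rfl] at hadj; exact (hzb i hi).2 hadj.symm
          · rw [if_neg hj] at hadj
            exact hbb i j ((lift _ _ (hbz i) (hbz j)).mpr hadj)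
end
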